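/- For every τ in the upper half-plane with √3/2 ≤ Im τ ≤ 1.5, one has |(Δ(τ) − q)/q²| < 23546, where q = e^{2πiτ}. -/

import Mathlib

open Complex

noncomputable section

/-- `sigma' k n = ∑_{d ∣ n} d^k`, the sum of the k-th powers of the positive divisors of n. -/
def sigma' (k n : ℕ) : ℕ := ∑ d ∈ n.divisors, d ^ k

/-- `qpar τ = e^{2πiτ}`. -/
def qpar (τ : ℂ) : ℂ := Complex.exp (2 * Real.pi * Complex.I * τ)

/-- The quasimodular Eisenstein series `E₂(τ) = 1 - 24 ∑_{n≥1} σ₁(n) qⁿ`. -/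
def E2 (τ : ℂ) : ℂ := 1 - 24 * ∑' n : ℕ, (sigma' 1 (n + 1) : ℂ) * qpar τ ^ (n + 1)

/-- The Eisenstein series `E₄(τ) = 1 + 240 ∑_{n≥1} σ₃(n) qⁿ`. -/
def E4 (τ : ℂ) : ℂ := 1 + 240 * ∑' n : ℕ, (sigma' 3 (n + 1) : ℂ) * qpar τ ^ (n + 1)

/-- The Eisenstein series `E₆(τ) = 1 - 504 ∑_{n≥1} σ₅(n) qⁿ`. -/
def E6 (τ : ℂ) : ℂ := 1 - 504 * ∑' n : ℕ, (sigma' 5 (n + 1) : ℂ) * qpar τ ^ (n + 1)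

/-- The modular discriminant `Δ = (E₄³ - E₆²)/1728`. -/
def Δ' (τ : ℂ) : ℂ := (E4 τ ^ 3 - E6 τ ^ 2) / 1728

/-- The modular j-invariant `j = E₄³/Δ`. -/
def jinv (τ : ℂ) : ℂ := E4 τ ^ 3 / Δ' τ

/-- `χ = E₂E₄E₆/Δ`. -/
def χ' (τ : ℂ) : ℂ := E2 τ * E4 τ * E6 τ / Δ' τ

/-- `ξ = E₄E₆/Δ`. -/
def ξ' (τ : ℂ) : ℂ := E4 τ * E6 τ / Δ' τ

/-- The almost holomorphic modular function `χ*(τ) = χ(τ) - (3/(π Im τ)) ξ(τ)`. -/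
def χstar (τ : ℂ) : ℂ := χ' τ - (3 / (Real.pi * τ.im) : ℝ) * ξ' τ

/-- `τ` lies in the upper half-plane and satisfies `aτ² + bτ + c = 0` where
`a > 0` and `gcd(a,b,c) = 1`. -/
def QuadPoint (τ : ℂ) (a b c : ℤ) : Prop :=
  0 < τ.im ∧ 0 < a ∧ Int.gcd (Int.gcd a b) c = 1 ∧
    (a : ℂ) * τ ^ 2 + (b : ℂ) * τ + (c : ℂ) = 0

/-- `τ` is a quadratic point of the upper half-plane. -/
def IsQuadratic (τ : ℂ) : Prop := ∃ a b c : ℤ, QuadPoint τ a b c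

/-- `τ` is a quadratic point of discriminant `D = b² - 4ac`. -/
def HasDisc (τ : ℂ) (D : ℤ) : Prop :=
  ∃ a b c : ℤ, QuadPoint τ a b c ∧ D = b ^ 2 - 4 * a * c

/-- Membership in the closed standard fundamental domain
`F = {z ∈ ℍ : |z| ≥ 1, -1/2 ≤ Re z ≤ 1/2}`. -/
def inF (τ : ℂ) : Prop :=
  0 < τ.im ∧ 1 ≤ ‖τ‖ ∧ -(1 / 2) ≤ τ.re ∧ τ.re ≤ 1 / 2

/-- `τ` and `τ'` lie in the same `SL₂(ℤ)`-orbit under Möbius transformations. -/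
def MoebiusEquiv (τ τ' : ℂ) : Prop :=
  ∃ γ : Matrix.SpecialLinearGroup (Fin 2) ℤ,
    τ' = ((γ.1 0 0 : ℂ) * τ + (γ.1 0 1 : ℂ)) / ((γ.1 1 0 : ℂ) * τ + (γ.1 1 1 : ℂ))

/-! For `Im τ ≥ √3/2` one has `|q| ≤ e^{-π√3} < 1/128`. With `σ_k(n+1) ≤ 2^{(k+1)n}`, the series
`A = ∑ σ₃(n) qⁿ` and `B = ∑ σ₅(n) qⁿ` are dominated by geometric series, so `A, B = q + O(q²)`.
Since `3·240 + 2·504 = 1728`, the linear terms of `(1 + 240A)³ - (1 - 504B)²` add up to `1728 q`,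
and everything else in `Δ - q` is `O(q²)` with explicit constants. -/

lemma sigma'_one (k : ℕ) : sigma' k 1 = 1 := by simp [sigma']

lemma sigma'_le_pow (k n : ℕ) : sigma' k n ≤ n ^ (k + 1) :=
  calc sigma' k n ≤ n.divisors.card • n ^ k :=
        Finset.sum_le_card_nsmul _ _ _ fun d hd => Nat.pow_le_pow_left (Nat.divisor_le hd) k
    _ ≤ n • n ^ k := Nat.mul_le_mul_right _ (Nat.card_divisors_le_self n)
    _ = n ^ (k + 1) := by rw [smul_eq_mul, pow_succ, mul_comm]

lemma sigma'_succ_le (k n : ℕ) : sigma' k (n + 1) ≤ (2 ^ (k + 1)) ^ n :=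
  calc sigma' k (n + 1) ≤ (n + 1) ^ (k + 1) := sigma'_le_pow k (n + 1)
    _ ≤ (2 ^ n) ^ (k + 1) := Nat.pow_le_pow_left Nat.lt_two_pow_self _
    _ = (2 ^ (k + 1)) ^ n := by rw [← pow_mul, ← pow_mul, mul_comm]

section GeometricDomination

variable {a : ℕ → ℂ} {M : ℝ} {q : ℂ}

lemma norm_coeff_mul_pow_succ_le (ha : ∀ n, ‖a n‖ ≤ M ^ n) (n : ℕ) :
    ‖a n * q ^ (n + 1)‖ ≤ ‖q‖ * (M * ‖q‖) ^ n := by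
  rw [norm_mul, norm_pow, mul_pow, pow_succ, ← mul_assoc, mul_comm ‖q‖]
  gcongr
  exact ha n

lemma norm_tsum_coeff_mul_pow_succ_le (ha : ∀ n, ‖a n‖ ≤ M ^ n) (hq : M * ‖q‖ < 1) :
    ‖∑' n, a n * q ^ (n + 1)‖ ≤ ‖q‖ / (1 - M * ‖q‖) := by
  have hM : 0 ≤ M := (norm_nonneg _).trans (by simpa using ha 1)
  refine tsum_of_norm_bounded ?_ (norm_coeff_mul_pow_succ_le ha)
  simpa [div_eq_mul_inv] using
    (hasSum_geometric_of_lt_one (by positivity) hq).mul_left ‖q‖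

lemma norm_tsum_coeff_mul_pow_succ_sub_le (ha : ∀ n, ‖a n‖ ≤ M ^ n) (hq : M * ‖q‖ < 1) :
    ‖∑' n, a n * q ^ (n + 1) - a 0 * q‖ ≤ M * ‖q‖ ^ 2 / (1 - M * ‖q‖) := by
  have hM : 0 ≤ M := (norm_nonneg _).trans (by simpa using ha 1)
  have hsum : Summable fun n => a n * q ^ (n + 1) :=
    .of_norm_bounded ((summable_geometric_of_lt_one (by positivity) hq).mul_left ‖q‖)
      (norm_coeff_mul_pow_succ_le ha)
  rw [hsum.tsum_eq_zero_add, zero_add, pow_one, add_sub_cancel_left]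
  refine tsum_of_norm_bounded (g := fun n => M * ‖q‖ ^ 2 * (M * ‖q‖) ^ n) ?_
    fun n => (norm_coeff_mul_pow_succ_le ha (n + 1)).trans_eq (by ring)
  simpa [div_eq_mul_inv] using
    (hasSum_geometric_of_lt_one (by positivity) hq).mul_left (M * ‖q‖ ^ 2)

end GeometricDomination

def sigmaSeries (k : ℕ) (q : ℂ) : ℂ := ∑' n : ℕ, (sigma' k (n + 1) : ℂ) * q ^ (n + 1)

lemma norm_sigma'_succ_le (k n : ℕ) : ‖(sigma' k (n + 1) : ℂ)‖ ≤ (2 ^ (k + 1) : ℝ) ^ n := by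
  rw [Complex.norm_natCast]
  exact_mod_cast sigma'_succ_le k n

lemma norm_sigmaSeries_le {k : ℕ} {q : ℂ} (hq : 2 ^ (k + 1) * ‖q‖ ≤ 1 / 2) :
    ‖sigmaSeries k q‖ ≤ 2 * ‖q‖ := by
  have h : ‖sigmaSeries k q‖ ≤ ‖q‖ / (1 - 2 ^ (k + 1) * ‖q‖) :=
    norm_tsum_coeff_mul_pow_succ_le (norm_sigma'_succ_le k) (hq.trans_lt (by norm_num))
  rw [le_div_iff₀ (by linarith)] at h
  nlinarith [mul_nonneg (norm_nonneg (sigmaSeries k q)) (sub_nonneg.2 hq)]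

lemma norm_sigmaSeries_sub_le {k : ℕ} {q : ℂ} (hq : 2 ^ (k + 1) * ‖q‖ ≤ 1 / 2) :
    ‖sigmaSeries k q - q‖ ≤ 2 ^ (k + 2) * ‖q‖ ^ 2 := by
  have h : ‖sigmaSeries k q - (sigma' k 1 : ℂ) * q‖
      ≤ 2 ^ (k + 1) * ‖q‖ ^ 2 / (1 - 2 ^ (k + 1) * ‖q‖) :=
    norm_tsum_coeff_mul_pow_succ_sub_le (norm_sigma'_succ_le k) (hq.trans_lt (by norm_num))
  rw [sigma'_one, Nat.cast_one, one_mul, le_div_iff₀ (by linarith)] at h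
  rw [pow_succ]
  nlinarith [mul_nonneg (norm_nonneg (sigmaSeries k q - q)) (sub_nonneg.2 hq)]

lemma norm_disc_poly_sub_le {q A B : ℂ} (hq : ‖q‖ ≤ 1 / 128)
    (hA : ‖A‖ ≤ 2 * ‖q‖) (hAq : ‖A - q‖ ≤ 32 * ‖q‖ ^ 2)
    (hB : ‖B‖ ≤ 2 * ‖q‖) (hBq : ‖B - q‖ ≤ 128 * ‖q‖ ^ 2) :
    ‖((1 + 240 * A) ^ 3 - (1 - 504 * B) ^ 2) / 1728 - q‖ ≤ 1600 * ‖q‖ ^ 2 := by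
  have hexpand : ((1 + 240 * A) ^ 3 - (1 - 504 * B) ^ 2) / 1728 - q
      = (720 * (A - q) + 1008 * (B - q) + 172800 * A ^ 2 + 13824000 * A ^ 3
          - 254016 * B ^ 2) / 1728 := by ring
  have htriangle : ‖720 * (A - q) + 1008 * (B - q) + 172800 * A ^ 2 + 13824000 * A ^ 3
      - 254016 * B ^ 2‖ ≤ 720 * ‖A - q‖ + 1008 * ‖B - q‖ + 172800 * ‖A‖ ^ 2
        + 13824000 * ‖A‖ ^ 3 + 254016 * ‖B‖ ^ 2 := by
    refine ((norm_sub_le _ _).trans (add_le_add norm_add₄_le le_rfl)).trans_eq ?_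
    simp only [norm_mul, norm_pow, Complex.norm_ofNat]
  have hA2 : ‖A‖ ^ 2 ≤ 4 * ‖q‖ ^ 2 := by nlinarith [norm_nonneg A]
  have hA3 : ‖A‖ ^ 3 ≤ 8 * ‖q‖ ^ 2 / 128 := by nlinarith [norm_nonneg A, norm_nonneg q]
  have hB2 : ‖B‖ ^ 2 ≤ 4 * ‖q‖ ^ 2 := by nlinarith [norm_nonneg B]
  rw [hexpand, norm_div, Complex.norm_ofNat, div_le_iff₀ (by norm_num)]
  linarith [sq_nonneg ‖q‖]

lemma norm_qpar (τ : ℂ) : ‖qpar τ‖ = Real.exp (-(2 * Real.pi * τ.im)) := by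
  rw [qpar, Complex.norm_exp]
  congr 1
  simp [Complex.mul_re, Complex.mul_im]

lemma norm_qpar_le {τ : ℂ} (hτ : Real.sqrt 3 / 2 ≤ τ.im) : ‖qpar τ‖ ≤ 1 / 128 := by
  have hsqrt3 : (1.732 : ℝ) ≤ Real.sqrt 3 := Real.le_sqrt_of_sq_le (by norm_num)
  have h5 : (5 : ℝ) ≤ 2 * Real.pi * τ.im := by nlinarith [Real.pi_gt_d6]
  have hexp5 : (128 : ℝ) ≤ Real.exp 5 :=
    calc (128 : ℝ) ≤ 2.7182818283 ^ 5 := by norm_num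
      _ ≤ Real.exp 1 ^ 5 := pow_le_pow_left₀ (by norm_num) Real.exp_one_gt_d9.le 5
      _ = Real.exp 5 := by rw [← Real.exp_nat_mul]; norm_num
  rw [norm_qpar, Real.exp_neg, one_div]
  exact inv_anti₀ (by norm_num) (hexp5.trans (Real.exp_le_exp.2 h5))

theorem disc_tail_bound_low_general (τ : ℂ) (hτ₁ : Real.sqrt 3 / 2 ≤ τ.im) :
    ‖(Δ' τ - qpar τ) / qpar τ ^ 2‖ < 23546 := by
  set q := qpar τ
  have hq : ‖q‖ ≤ 1 / 128 := norm_qpar_le hτ₁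
  have hq0 : 0 < ‖q‖ := norm_pos_iff.2 (Complex.exp_ne_zero _)
  have h3 : 2 ^ (3 + 1) * ‖q‖ ≤ 1 / 2 := by linarith
  have h5 : 2 ^ (5 + 1) * ‖q‖ ≤ 1 / 2 := by linarith
  have hΔ : ‖Δ' τ - q‖ ≤ 1600 * ‖q‖ ^ 2 :=
    norm_disc_poly_sub_le hq (A := sigmaSeries 3 q) (B := sigmaSeries 5 q)
      (norm_sigmaSeries_le h3) ((norm_sigmaSeries_sub_le h3).trans_eq (by norm_num))
      (norm_sigmaSeries_le h5) ((norm_sigmaSeries_sub_le h5).trans_eq (by norm_num))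
  rw [norm_div, norm_pow, div_lt_iff₀ (by positivity)]
  linarith [pow_pos hq0 2]

/-- For `√3/2 ≤ Im τ ≤ 1.5`, `|(Δ(τ) - q)/q²| < 23546`. -/
theorem disc_tail_bound_low (τ : ℂ) (hτ₁ : Real.sqrt 3 / 2 ≤ τ.im) (hτ₂ : τ.im ≤ 1.5) :
    ‖(Δ' τ - qpar τ) / qpar τ ^ 2‖ < 23546 :=
  disc_tail_bound_low_general τ hτ₁
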